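/- Let X be a compact metric space and f₁,…,f_k : X → X homeomorphisms such that the IFS is forward minimal and backward minimal. Assume there is h ∈ Γ having exactly two fixed points p ≠ q, with p attracting and q repelling in the sense that hⁿ converges to p uniformly on every compact subset of X \ {q}. Then the IFS is contractible with attractor X, and it satisfies the deterministic chaos game: for every disjunctive sequence ω ∈ Ω and every x ∈ X, O⁺_ω(x) is dense in X. -/
import Mathlib


open Set Filter Topology

/-- The Hutchinson operator of the IFS generated by `f 0, …, f (k-1)`. -/
def Hutch {X : Type*} {k : ℕ} (f : Fin k → X → X) (S : Set X) : Set X :=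
  ⋃ i, f i '' S

/-- The semigroup generated by the maps `f 0, …, f (k-1)`: all finite (nonempty)
compositions. -/
def IFSsemigroup {X : Type*} {k : ℕ} (f : Fin k → X → X) : Set (X → X) :=
  {g | ∃ l : List (Fin k), l ≠ [] ∧ g = (l.map f).foldr (· ∘ ·) id}

/-- The Γ-orbit of a point. -/
def GammaOrbit {X : Type*} {k : ℕ} (f : Fin k → X → X) (x : X) : Set X :=
  {y | ∃ g ∈ IFSsemigroup f, g x = y}

/-- Convergence of a sequence of sets to a compact set `L` in the Vietoris sense. -/
def VTendsto {X : Type*} [TopologicalSpace X] (A : ℕ → Set X) (L : Set X) : Prop :=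
  ∀ U V : Set X, IsOpen U → L ⊆ U → IsOpen V → (V ∩ L).Nonempty →
    ∃ n₀ : ℕ, ∀ n ≥ n₀, A n ⊆ U ∧ (A n ∩ V).Nonempty

/-- The pointwise basin of a compact set `A`. -/
def BasinP {X : Type*} [TopologicalSpace X] {k : ℕ} (f : Fin k → X → X) (A : Set X) :
    Set X :=
  {x | VTendsto (fun n => (Hutch f)^[n] {x}) A}

/-- `A` is a pointwise attractor. -/
def IsPointwiseAttractor {X : Type*} [TopologicalSpace X] {k : ℕ}
    (f : Fin k → X → X) (A : Set X) : Prop :=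
  IsCompact A ∧ A.Nonempty ∧ ∃ U : Set X, IsOpen U ∧ A ⊆ U ∧ U ⊆ BasinP f A

/-- `A` is a strict attractor. -/
def IsStrictAttractor {X : Type*} [TopologicalSpace X] {k : ℕ}
    (f : Fin k → X → X) (A : Set X) : Prop :=
  IsCompact A ∧ A.Nonempty ∧ ∃ U : Set X, IsOpen U ∧ A ⊆ U ∧
    ∀ K : Set X, K.Nonempty → IsCompact K → K ⊆ U →
      VTendsto (fun n => (Hutch f)^[n] K) A

/-- The basin of a strict attractor: the union of all open neighborhoods witnessing
the attraction. -/
def BasinS {X : Type*} [TopologicalSpace X] {k : ℕ} (f : Fin k → X → X) (A : Set X) :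
    Set X :=
  ⋃₀ {U : Set X | IsOpen U ∧ A ⊆ U ∧
    ∀ K : Set X, K.Nonempty → IsCompact K → K ⊆ U →
      VTendsto (fun n => (Hutch f)^[n] K) A}

/-- `f_ω^n = f_{ω n-1} ∘ ⋯ ∘ f_{ω 0}` (the orbital branch corresponding to `ω`). -/
def FibIter {X : Type*} {k : ℕ} (f : Fin k → X → X) (ω : ℕ → Fin k) : ℕ → X → X
  | 0 => id
  | n + 1 => f (ω n) ∘ FibIter f ω n

/-- The tail `{f_ω^m x : m ≥ n}` of the ω-fiberwise orbit of `x`. -/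
def TailOrbit {X : Type*} {k : ℕ} (f : Fin k → X → X) (ω : ℕ → Fin k) (x : X) (n : ℕ) :
    Set X :=
  {y | ∃ m ≥ n, FibIter f ω m x = y}

/-- The ω-fiberwise orbit `O⁺_ω(x) = {f_ω^n x : n ≥ 1}`. -/
def Oplus {X : Type*} {k : ℕ} (f : Fin k → X → X) (ω : ℕ → Fin k) (x : X) : Set X :=
  TailOrbit f ω x 1

/-- The shift map on `Ω = {1,…,k}^ℕ`. -/
def shiftSeq {k : ℕ} (ω : ℕ → Fin k) : ℕ → Fin k := fun n => ω (n + 1)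

/-- A sequence is disjunctive if its orbit under the shift is dense in
`Ω = {1,…,k}^ℕ` (with the product topology). -/
def Disjunctive {k : ℕ} (ω : ℕ → Fin k) : Prop :=
  Dense (Set.range fun n => shiftSeq^[n] ω)

/-- The IFS is forward minimal on the whole space. -/
def ForwardMinimal {X : Type*} [TopologicalSpace X] {k : ℕ} (f : Fin k → X → X) : Prop :=
  ∀ B : Set X, B.Nonempty → IsClosed B → (∀ i, f i '' B ⊆ B) → B = Set.univ

/-- The IFS is backward minimal on the whole space. -/
def BackwardMinimal {X : Type*} [TopologicalSpace X] {k : ℕ} (f : Fin k → X → X) : Prop :=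
  ∀ B : Set X, B.Nonempty → IsClosed B →
    (∀ g ∈ IFSsemigroup f, (g ⁻¹' B).Nonempty ∧ g ⁻¹' B ⊆ B) → B = Set.univ

/-- The attractor `A` is contractible. -/
def ContractibleAttractor {X : Type*} [TopologicalSpace X] {k : ℕ}
    (f : Fin k → X → X) (A : Set X) : Prop :=
  ∀ K : Set X, K ⊆ A → IsCompact K → K ≠ A →
    ∀ 𝒰 : Set (Set X), (∀ U ∈ 𝒰, IsOpen U) → A ⊆ ⋃₀ 𝒰 →
      ∃ g ∈ IFSsemigroup f, ∃ U ∈ 𝒰, g '' K ⊆ U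

/-- `f_{ω 0} ∘ ⋯ ∘ f_{ω (n-1)}` (compositions in the reverse order). -/
def FibDown {X : Type*} {k : ℕ} (f : Fin k → X → X) (ω : ℕ → Fin k) : ℕ → X → X
  | 0 => id
  | n + 1 => FibDown f ω n ∘ f (ω n)

/-- The attractor `A` is strongly-fibred. -/
def StronglyFibred {X : Type*} [TopologicalSpace X] {k : ℕ}
    (f : Fin k → X → X) (A : Set X) : Prop :=
  ∀ U : Set X, IsOpen U → (U ∩ A).Nonempty →
    ∃ ω : ℕ → Fin k, (⋂ n, FibDown f ω n '' A) ⊆ U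

section AuxLemmas

lemma foldr_comp_eq' {X : Type*} (l : List (X → X)) (b : X → X) :
    l.foldr (· ∘ ·) b = l.foldr (· ∘ ·) id ∘ b := by
  induction l with
  | nil => rfl
  | cons a t ih => simp only [List.foldr_cons, ih]; rfl

lemma foldr_comp_append' {X : Type*} (l₁ l₂ : List (X → X)) :
    (l₁ ++ l₂).foldr (· ∘ ·) id = l₁.foldr (· ∘ ·) id ∘ l₂.foldr (· ∘ ·) id := by
  rw [List.foldr_append, foldr_comp_eq']

lemma IFSsemigroup.comp_mem {X : Type*} {k : ℕ} {f : Fin k → X → X} {g₁ g₂ : X → X}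
    (h₁ : g₁ ∈ IFSsemigroup f) (h₂ : g₂ ∈ IFSsemigroup f) : g₁ ∘ g₂ ∈ IFSsemigroup f := by
  obtain ⟨l₁, hl₁, rfl⟩ := h₁
  obtain ⟨l₂, hl₂, rfl⟩ := h₂
  exact ⟨l₁ ++ l₂, by simp [hl₁], by rw [List.map_append, List.foldr_append]; exact (foldr_comp_eq' _ _).symm⟩

lemma IFSsemigroup.single_mem {X : Type*} {k : ℕ} (f : Fin k → X → X) (i : Fin k) :
    f i ∈ IFSsemigroup f :=
  ⟨[i], by simp, by simp⟩

lemma IFSsemigroup.iterate_mem {X : Type*} {k : ℕ} {f : Fin k → X → X} {h : X → X}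
    (hh : h ∈ IFSsemigroup f) : ∀ n, 1 ≤ n → h^[n] ∈ IFSsemigroup f := by
  intro n
  induction n with
  | zero => intro hn; omega
  | succ m ih =>
    intro _
    rcases Nat.eq_or_lt_of_le (Nat.zero_le m) with hm | hm
    · simpa [← hm] using hh
    · rw [Function.iterate_succ']
      exact IFSsemigroup.comp_mem hh (ih hm)

lemma IFSsemigroup.isHomeomorph {X : Type*} [TopologicalSpace X] {k : ℕ}
    {f : Fin k → X → X} (hf : ∀ i, IsHomeomorph (f i)) {g : X → X}
    (hg : g ∈ IFSsemigroup f) : IsHomeomorph g := by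
  obtain ⟨l, -, rfl⟩ := hg
  induction l with
  | nil => simpa using (Homeomorph.refl X).isHomeomorph
  | cons a t ih =>
    have : ((a :: t).map f).foldr (· ∘ ·) id = f a ∘ (t.map f).foldr (· ∘ ·) id := by
      simp
    rw [this]
    exact (hf a).comp ih

lemma fibIter_add {X : Type*} {k : ℕ} (f : Fin k → X → X) (ω : ℕ → Fin k)
    (n m : ℕ) (x : X) :
    FibIter f ω (n + m) x = FibIter f (fun j => ω (n + j)) m (FibIter f ω n x) := by
  induction m with
  | zero => rfl
  | succ m ih =>
    show f (ω (n + m)) (FibIter f ω (n + m) x) = _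
    rw [ih]
    rfl

lemma fibIter_word {X : Type*} {k : ℕ} (f : Fin k → X → X) (i₀ : Fin k)
    (l : List (Fin k)) (ω : ℕ → Fin k)
    (hω : ∀ j < l.length, ω j = l.reverse.getD j i₀) (z : X) :
    FibIter f ω l.length z = (l.map f).foldr (· ∘ ·) id z := by
  induction l generalizing z with
  | nil => rfl
  | cons a t ih =>
    have hrev : (a :: t).reverse = t.reverse ++ [a] := by simp
    have hlast : ω t.length = a := by
      have := hω t.length (by simp)
      rw [hrev, List.getD_append_right _ _ _ _ (by simp)] at this
      simpa using this
    have hprev : ∀ j < t.length, ω j = t.reverse.getD j i₀ := by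
      intro j hj
      have := hω j (by simp; omega)
      rwa [hrev, List.getD_append _ _ _ _ (by simpa using hj)] at this
    show f (ω t.length) (FibIter f ω t.length z) = f a ((t.map f).foldr (· ∘ ·) id z)
    rw [hlast, ih hprev]

lemma shiftSeq_iterate_apply {k : ℕ} (ω : ℕ → Fin k) (n j : ℕ) :
    shiftSeq^[n] ω j = ω (j + n) := by
  induction n generalizing ω with
  | zero => rfl
  | succ m ih =>
    rw [Function.iterate_succ_apply, ih]
    show ω (j + m + 1) = ω (j + (m + 1))
    ring_nf

lemma disjunctive_occur {k : ℕ} {ω : ℕ → Fin k} (hω : Disjunctive ω)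
    (c : ℕ → Fin k) (M : ℕ) : ∃ n, ∀ j < M, ω (n + j) = c j := by
  have hopen : IsOpen {α : ℕ → Fin k | ∀ j < M, α j = c j} := by
    have : {α : ℕ → Fin k | ∀ j < M, α j = c j}
        = ⋂ j ∈ Finset.range M, (fun α : ℕ → Fin k => α j) ⁻¹' {c j} := by
      ext α; simp [Set.mem_iInter]
    rw [this]
    exact isOpen_biInter_finset fun j _ =>
      (continuous_apply j).isOpen_preimage _ (isOpen_discrete _)
  obtain ⟨α, ⟨n, rfl⟩, hmem⟩ := hω.exists_mem_open hopen ⟨c, fun j _ => rfl⟩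
  refine ⟨n, fun j hj => ?_⟩
  have h2 : ω (j + n) = c j := by
    rw [← shiftSeq_iterate_apply ω n j]; exact hmem j hj
  rwa [Nat.add_comm]

end AuxLemmas

open Filter in
theorem forward_backward_minimal_with_north_south_map_chaos_game
    {X : Type*} [MetricSpace X] [CompactSpace X] {k : ℕ}
    (f : Fin k → X → X) (hf : ∀ i, IsHomeomorph (f i))
    (hfm : ForwardMinimal f) (hbm : BackwardMinimal f)
    (h : X → X) (hh : h ∈ IFSsemigroup f)
    (p q : X) (hpq : p ≠ q)
    (hfixp : h p = p) (hfixq : h q = q)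
    (honly : ∀ x : X, h x = x → x = p ∨ x = q)
    (hattr : ∀ K : Set X, IsCompact K → K ⊆ {q}ᶜ →
      TendstoUniformlyOn (fun n x => h^[n] x) (fun _ => p) atTop K) :
    ContractibleAttractor f (Set.univ : Set X) ∧
      ∀ ω : ℕ → Fin k, Disjunctive ω → ∀ x : X, Dense (Oplus f ω x) := by
  classical
  obtain ⟨l₀, hl₀ne, -⟩ := id hh
  have i₀ : Fin k := l₀.head hl₀ne
  -- The Γ-orbit of p is dense (forward minimality).
  have horb : Dense {y : X | ∃ g ∈ IFSsemigroup f, g p = y} := by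
    set O := {y : X | ∃ g ∈ IFSsemigroup f, g p = y} with hO
    have hOinv : ∀ i, f i '' O ⊆ O := by
      rintro i y ⟨z, ⟨g, hg, rfl⟩, rfl⟩
      exact ⟨f i ∘ g, IFSsemigroup.comp_mem (IFSsemigroup.single_mem f i) hg, rfl⟩
    have := hfm (closure O) ⟨p, subset_closure ⟨h, hh, hfixp⟩⟩ isClosed_closure
      (fun i => (image_closure_subset_closure_image ((hf i).continuous)).trans
        (closure_mono (hOinv i)))
    rw [dense_iff_closure_eq]
    exact this
  -- Key lemma: every proper compact set can be mapped into any nonempty open set.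
  have hC : ∀ K : Set X, IsCompact K → K ≠ Set.univ → ∀ U : Set X, IsOpen U →
      U.Nonempty → ∃ g ∈ IFSsemigroup f, g '' K ⊆ U := by
    intro K hK hKne U hUopen hUne
    -- find u ∈ Γ with u p ∈ U
    obtain ⟨y, hyU, u, hu, hup⟩ :=
      (dense_iff_inter_open.1 horb) U hUopen hUne
    rw [← hup] at hyU
    -- δ such that u '' (ball p δ) ⊆ U
    have hucont : Continuous u := (IFSsemigroup.isHomeomorph hf hu).continuous
    have hpre : IsOpen (u ⁻¹' U) := hUopen.preimage hucont
    obtain ⟨δ, hδpos, hδ⟩ := Metric.isOpen_iff.1 hpre p hyU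
    -- find m ∈ Γ with q ∉ m '' K
    have hA : ∃ m ∈ IFSsemigroup f, q ∉ m '' K := by
      by_contra hcon
      push_neg at hcon
      set T := {w : X | ∃ g ∈ IFSsemigroup f, g w = q} with hT
      have hTK : T ⊆ K := by
        rintro w ⟨g, hg, hgw⟩
        obtain ⟨w', hw'K, hw'⟩ := hcon g hg
        have : w = w' := (IFSsemigroup.isHomeomorph hf hg).injective (hgw.trans hw'.symm)
        rwa [this]
      have hTuniv : closure T = Set.univ := by
        refine hbm (closure T) ⟨q, subset_closure ⟨h, hh, hfixq⟩⟩ isClosed_closure ?_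
        intro g hg
        have hgh := IFSsemigroup.isHomeomorph hf hg
        obtain ⟨e, he⟩ := isHomeomorph_iff_exists_homeomorph.1 hgh
        constructor
        · obtain ⟨w, hw⟩ := hgh.surjective q
          exact ⟨w, by
            show g w ∈ closure T
            rw [hw]; exact subset_closure ⟨h, hh, hfixq⟩⟩
        · have hTpre : g ⁻¹' T ⊆ T := by
            rintro w ⟨g', hg', hg'w⟩
            exact ⟨g' ∘ g, IFSsemigroup.comp_mem hg' hg, hg'w⟩
          calc g ⁻¹' closure T = ⇑e ⁻¹' closure T := by rw [he]
            _ = closure (⇑e ⁻¹' T) := e.preimage_closure T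
            _ = closure (g ⁻¹' T) := by rw [he]
            _ ⊆ closure T := closure_mono hTpre
      have : K = Set.univ := Set.eq_univ_of_univ_subset
        (hTuniv ▸ (hK.isClosed.closure_subset_iff.2 hTK))
      exact hKne this
    obtain ⟨m, hm, hmq⟩ := hA
    have hmcont : Continuous m := (IFSsemigroup.isHomeomorph hf hm).continuous
    have hmK : IsCompact (m '' K) := hK.image hmcont
    have hmKq : m '' K ⊆ {q}ᶜ := fun z hz hzq => hmq (Set.mem_singleton_iff.1 hzq ▸ hz)
    have hunif := (Metric.tendstoUniformlyOn_iff.1 (hattr (m '' K) hmK hmKq)) δ hδpos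
    obtain ⟨N₀, hN₀⟩ := eventually_atTop.1 hunif
    set N := max N₀ 1 with hN
    have hNΓ : h^[N] ∈ IFSsemigroup f := IFSsemigroup.iterate_mem hh N (le_max_right _ _)
    refine ⟨u ∘ (h^[N] ∘ m), IFSsemigroup.comp_mem hu (IFSsemigroup.comp_mem hNΓ hm), ?_⟩
    rintro y ⟨z, hzK, rfl⟩
    have h1 : dist p (h^[N] (m z)) < δ := hN₀ N (le_max_left _ _) (m z) ⟨z, hzK, rfl⟩
    have h2 : h^[N] (m z) ∈ Metric.ball p δ := by
      rw [Metric.mem_ball, dist_comm]; exact h1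
    exact hδ h2
  have hXne : (Set.univ : Set X).Nonempty := ⟨p, trivial⟩
  constructor
  · -- Contractibility
    intro K hKsub hK hKne 𝒰 h𝒰 hcov
    obtain ⟨U, hU𝒰, hpU⟩ := hcov (Set.mem_univ p)
    obtain ⟨g, hg, hgK⟩ := hC K hK hKne U (h𝒰 U hU𝒰) ⟨p, hpU⟩
    exact ⟨g, hg, U, hU𝒰, hgK⟩
  · -- Deterministic chaos game
    intro ω hdisj x
    rw [dense_iff_inter_open]
    intro U hUopen hUne
    have hFne : Uᶜ ≠ Set.univ := by
      intro hcon
      obtain ⟨y, hy⟩ := hUne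
      have : y ∈ Uᶜ := hcon ▸ trivial
      exact this hy
    obtain ⟨γ, hγ, hγF⟩ := hC Uᶜ (hUopen.isClosed_compl.isCompact) hFne U hUopen hUne
    obtain ⟨l, hlne, hleq⟩ := hγ
    -- find an occurrence of the word of γ at a position n ≥ 1
    set c' : ℕ → Fin k := fun j => if j = 0 then i₀ else l.reverse.getD (j - 1) i₀ with hc'
    obtain ⟨n₀, hn₀⟩ := disjunctive_occur hdisj c' (l.length + 1)
    set n := n₀ + 1 with hn
    have hword : ∀ j < l.length, (fun j => ω (n + j)) j = l.reverse.getD j i₀ := by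
      intro j hj
      have h1 := hn₀ (j + 1) (by omega)
      have h2 : n₀ + (j + 1) = n + j := by omega
      rw [h2] at h1
      simpa [hc'] using h1
    set z := FibIter f ω n x with hz
    have hmain : FibIter f ω (n + l.length) x = γ z := by
      rw [fibIter_add, hleq]
      exact fibIter_word f i₀ l (fun j => ω (n + j)) hword z
    by_cases hzU : z ∈ U
    · exact ⟨z, hzU, n, by omega, rfl⟩
    · refine ⟨γ z, hγF ⟨z, hzU, rfl⟩, n + l.length, by omega, hmain⟩
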